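/- Let M be a finite matroid of rank at least 1, a ≥ 1 be an integer, and 𝒳 ⊆ ℛ_a(M). Then there exists a nonloop e ∈ E(M) such that ε_M(𝒳 ∩ ℛ_a(M / e)) ≥ (1 - a/r(M)) · ε_M(𝒳). -/

import Mathlib

open Set
open scoped Classical

namespace Matroid

variable {α β : Type*}

/-- The rank of a set `X` in a matroid `M`: the maximum size of an independent subset of `X`
(appropriate for finite matroids). -/
noncomputable def rk (M : Matroid α) (X : Set α) : ℕ :=
  sSup {n | ∃ I, I ⊆ X ∧ M.Indep I ∧ I.ncard = n}

/-- The rank `r(M)` of a matroid `M`. -/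
noncomputable def rank (M : Matroid α) : ℕ := M.rk M.E

/-- The deletion `M \ D` of a set `D` from `M`. -/
def deleteSet (M : Matroid α) (D : Set α) : Matroid α := M ↾ (M.E \ D)

/-- The contraction `M / C` of a set `C` in `M`, defined via duality. -/
def contractSet (M : Matroid α) (C : Set α) : Matroid α := (M✶.deleteSet C)✶

/-- `N` is a minor of `M`, i.e. `N = M / C \ D` for some sets `C` and `D`. -/
def IsMinorSet (N M : Matroid α) : Prop := ∃ C D : Set α, (M.contractSet C).deleteSet D = N

/-- An isomorphism between matroids, possibly on different ground types. -/
def IsIso (M : Matroid α) (N : Matroid β) : Prop :=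
  ∃ e : M.E ≃ N.E, ∀ I : Set M.E, M.Indep ((↑) '' I) ↔ N.Indep ((↑) '' (e '' I))

/-- `N` is isomorphic to the uniform matroid `U_{k,n}`: the ground set has `n` elements and
the independent sets are exactly the subsets with at most `k` elements. -/
def IsUnif (N : Matroid α) (k n : ℕ) : Prop :=
  N.E.Finite ∧ N.E.ncard = n ∧ ∀ I ⊆ N.E, (N.Indep I ↔ I.ncard ≤ k)

/-- `M` has a minor isomorphic to `U_{k,n}`. -/
def HasUnifMinor (M : Matroid α) (k n : ℕ) : Prop :=
  ∃ N : Matroid α, N.IsMinorSet M ∧ N.IsUnif k n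

/-- `τ_a(M)`: the minimum size of a collection of subsets of `E(M)`, each of rank at most `a`,
whose union is `E(M)`. -/
noncomputable def tau (M : Matroid α) (a : ℕ) : ℕ :=
  sInf {n | ∃ 𝒞 : Finset (Set α),
    𝒞.card = n ∧ (∀ X ∈ 𝒞, X ⊆ M.E ∧ M.rk X ≤ a) ∧ M.E ⊆ ⋃₀ ↑𝒞}

/-- `M` is `d`-thick: every collection of sets, each of rank less than `r(M)`, whose union
is `E(M)`, has at least `d` members. -/
def Thick (M : Matroid α) (d : ℕ) : Prop :=
  ∀ 𝒞 : Finset (Set α), (∀ X ∈ 𝒞, X ⊆ M.E ∧ M.rk X < M.rank) → M.E ⊆ ⋃₀ ↑𝒞 → d ≤ 𝒞.card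

/-- A set `X` is `d`-thick in `M` if the restriction `M|X` is `d`-thick. -/
def ThickIn (M : Matroid α) (d : ℕ) (X : Set α) : Prop := (M ↾ X).Thick d

/-- A collection of sets is simple in `M` if its members are pairwise dissimilar,
i.e. distinct members have distinct closures. -/
def SimpleColl (M : Matroid α) (𝒳 : Finset (Set α)) : Prop :=
  ∀ X ∈ 𝒳, ∀ Y ∈ 𝒳, M.closure X = M.closure Y → X = Y

/-- `ε_M(𝒳)`: the maximum size of a subcollection of `𝒳` that is simple in `M`. -/
noncomputable def eps (M : Matroid α) (𝒳 : Finset (Set α)) : ℕ :=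
  sSup {n | ∃ 𝒴 : Finset (Set α), 𝒴 ⊆ 𝒳 ∧ M.SimpleColl 𝒴 ∧ 𝒴.card = n}

/-- `𝒳` is `d`-firm in `M`: every subcollection `𝒳'` with `|𝒳'| > |𝒳|/d` has the same rank
as `𝒳`. -/
def Firm (M : Matroid α) (d : ℕ) (𝒳 : Finset (Set α)) : Prop :=
  ∀ 𝒳' ⊆ 𝒳, 𝒳.card < d * 𝒳'.card → M.rk (⋃₀ ↑𝒳') = M.rk (⋃₀ ↑𝒳)

/-- `ℱ` is a cover of the collection `𝒳` in `M`: every member of `𝒳` is contained in a member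
of `ℱ`. -/
def CoverOf (M : Matroid α) (ℱ 𝒳 : Finset (Set α)) : Prop :=
  (∀ F ∈ ℱ, F ⊆ M.E) ∧ ∀ X ∈ 𝒳, ∃ F ∈ ℱ, X ⊆ F

/-- `ℱ` is a cover of the matroid `M`: every element of `E(M)` lies in a member of `ℱ`. -/
def CoverOfGround (M : Matroid α) (ℱ : Finset (Set α)) : Prop :=
  (∀ F ∈ ℱ, F ⊆ M.E) ∧ M.E ⊆ ⋃₀ ↑ℱ

/-- The weight `wt^d_M(ℱ) = Σ_{F ∈ ℱ} d^{r_M(F)}`. -/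
noncomputable def wt (M : Matroid α) (d : ℕ) (ℱ : Finset (Set α)) : ℕ :=
  ∑ F ∈ ℱ, d ^ M.rk F

/-- `ℱ` is a `d`-minimal cover of the collection `𝒳` in `M`. -/
def MinimalCoverOf (M : Matroid α) (d : ℕ) (ℱ 𝒳 : Finset (Set α)) : Prop :=
  M.CoverOf ℱ 𝒳 ∧ ∀ ℱ' : Finset (Set α), M.CoverOf ℱ' 𝒳 → M.wt d ℱ ≤ M.wt d ℱ'

/-- `ℱ` is a `d`-minimal cover of the matroid `M`. -/
def MinimalCoverOfGround (M : Matroid α) (d : ℕ) (ℱ : Finset (Set α)) : Prop :=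
  M.CoverOfGround ℱ ∧ ∀ ℱ' : Finset (Set α), M.CoverOfGround ℱ' → M.wt d ℱ ≤ M.wt d ℱ'

/-- `τ^d(M)`: the minimum weight of a cover of `M`. -/
noncomputable def tauW (M : Matroid α) (d : ℕ) : ℕ :=
  sInf {n | ∃ ℱ : Finset (Set α), M.CoverOfGround ℱ ∧ M.wt d ℱ = n}

/-- `𝒳` is `d`-scattered in `M`: every member of `𝒳` is `d`-thick in `M`, and
`{cl_M(X) : X ∈ 𝒳}` is a `d`-minimal cover of `𝒳` in `M`. -/
def Scattered (M : Matroid α) (d : ℕ) (𝒳 : Finset (Set α)) : Prop :=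
  (∀ X ∈ 𝒳, M.ThickIn d X) ∧ M.MinimalCoverOf d (𝒳.image M.closure) 𝒳

/-- `(M, 𝒮; L)` is an `(a, q, h, d)`-pyramid, where `h = L.length` and `L` lists the
elements `e_1, …, e_h`. -/
def IsPyramid (M : Matroid α) (𝒮 : Finset (Set α)) (L : List α) (a q d : ℕ) : Prop :=
  L.Nodup ∧ M.Indep {x | x ∈ L} ∧
  𝒮.Nonempty ∧
  (∀ S ∈ 𝒮, S ⊆ M.E ∧ M.rk S = a) ∧
  (∀ S ∈ 𝒮, M.rk (S ∪ {x | x ∈ L}) = M.rk S + M.rk {x | x ∈ L}) ∧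
  (∀ i < L.length, ∀ S ∈ 𝒮, ∃ f : Fin q → Set α,
    (∀ j, f j ∈ 𝒮) ∧
    (∀ j k, j ≠ k →
      (M.contractSet {x | x ∈ L.take i}).closure (f j) ≠
        (M.contractSet {x | x ∈ L.take i}).closure (f k)) ∧
    (∀ j, (M.contractSet {x | x ∈ L.take (i+1)}).closure (f j) =
      (M.contractSet {x | x ∈ L.take (i+1)}).closure S)) ∧
  (∀ S ∈ 𝒮, M.ThickIn d S)

/-- `M` is representable over the field `F`. -/
def RepresentableOver (M : Matroid α) (F : Type*) [Field F] : Prop :=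
  ∃ (n : ℕ) (φ : α → (Fin n → F)),
    ∀ I ⊆ M.E, (M.Indep I ↔ LinearIndependent F (fun x : I => φ x))

end Matroid

/-!
Fix a basis `B` of `M` and a largest simple subcollection `𝒴` of `𝒳`. Each `X ∈ 𝒴` has rank `a`,
so its closure contains at most `a` elements of the independent set `B`. Double counting the
incidences, some `e ∈ B` lies in the closure of at most `a |𝒴| / r(M)` members of `𝒴`. The other
members of `𝒴` do not span `e`, so they keep rank `a` in `M / e`, and they are still pairwise
dissimilar in `M`.
-/

open Finset in
lemma Finset.Nonempty.exists_card_mul_card_filter_le {ι κ : Type*} {s : Finset ι}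
    (hs : s.Nonempty) (t : Finset κ) (r : ι → κ → Prop) [∀ x y, Decidable (r x y)] {a : ℕ}
    (h : ∀ y ∈ t, #(s.filter (r · y)) ≤ a) :
    ∃ x ∈ s, #s * #(t.filter (r x)) ≤ a * #t := by
  refine exists_le_of_sum_le hs ?_
  calc ∑ x ∈ s, #s * #(t.filter (r x))
      = #s * ∑ y ∈ t, #(s.filter (r · y)) := by
        rw [← mul_sum]
        exact congrArg _ (sum_card_bipartiteAbove_eq_sum_card_bipartiteBelow r)
    _ ≤ #s * ∑ _y ∈ t, a := Nat.mul_le_mul_left _ (sum_le_sum h)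
    _ = ∑ _x ∈ s, a * #t := by simp [mul_comm]

namespace Matroid

variable {α : Type*} {M : Matroid α} {I J X : Set α} {e : α}

section Rank

variable [M.Finite]

lemma Indep.ncard_le_rk (hJ : M.Indep J) (hJX : J ⊆ X) : J.ncard ≤ M.rk X := by
  refine le_csSup ⟨M.E.ncard, ?_⟩ ⟨J, hJX, hJ, rfl⟩
  rintro n ⟨K, -, hK, rfl⟩
  exact ncard_le_ncard hK.subset_ground M.ground_finite

lemma IsBasis'.rk_eq_ncard (hI : M.IsBasis' I X) : M.rk X = I.ncard := by
  refine le_antisymm (csSup_le ⟨_, I, hI.subset, hI.indep, rfl⟩ ?_)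
    (hI.indep.ncard_le_rk hI.subset)
  rintro n ⟨J, hJX, hJ, rfl⟩
  rw [ncard_def, ncard_def]
  refine ENat.toNat_le_toNat ((hJ.encard_le_eRk_of_subset hJX).trans hI.encard_eq_eRk.ge) ?_
  exact hI.indep.finite.encard_lt_top.ne

lemma Indep.rk_eq_ncard (hI : M.Indep I) : M.rk I = I.ncard :=
  hI.isBasis_self.isBasis'.rk_eq_ncard

lemma Indep.ncard_inter_closure_le_rk (hJ : M.Indep J) (X : Set α) :
    (J ∩ M.closure X).ncard ≤ M.rk X := by
  obtain ⟨I, hI⟩ := M.exists_isBasis' X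
  rw [hI.rk_eq_ncard, ← hI.isBasis_closure_right.isBasis'.rk_eq_ncard]
  exact (hJ.subset inter_subset_left).ncard_le_rk inter_subset_right

lemma rk_contractSet_singleton_eq (heE : e ∈ M.E) (heX : e ∉ M.closure X) :
    (M.contractSet {e}).rk X = M.rk X := by
  change (M ／ {e}).rk X = M.rk X
  obtain ⟨I, hI⟩ := M.exists_isBasis' X
  have heI : M.Indep (I ∪ {e}) := by
    rw [union_singleton, hI.indep.insert_indep_iff, hI.closure_eq_closure]
    exact .inl ⟨heE, heX⟩
  have heX' : e ∉ X := fun h ↦ heX (M.mem_closure_of_mem' h heE)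
  have hI' := hI.contract_isBasis_of_indep heI
  rw [sdiff_singleton_eq_self heX', sdiff_singleton_eq_self fun h ↦ heX' (hI.subset h)] at hI'
  rw [hI.rk_eq_ncard, hI'.rk_eq_ncard]

end Rank

section Eps

variable {𝒳 𝒴 𝒵 : Finset (Set α)}

lemma SimpleColl.mono (h𝒴 : M.SimpleColl 𝒴) (h𝒵𝒴 : 𝒵 ⊆ 𝒴) : M.SimpleColl 𝒵 :=
  fun X hX Y hY ↦ h𝒴 X (h𝒵𝒴 hX) Y (h𝒵𝒴 hY)

lemma bddAbove_card_simpleColl (M : Matroid α) (𝒳 : Finset (Set α)) :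
    BddAbove {n | ∃ 𝒴 : Finset (Set α), 𝒴 ⊆ 𝒳 ∧ M.SimpleColl 𝒴 ∧ 𝒴.card = n} := by
  refine ⟨𝒳.card, ?_⟩
  rintro n ⟨𝒴, h𝒴𝒳, -, rfl⟩
  exact Finset.card_le_card h𝒴𝒳

lemma SimpleColl.card_le_eps (h𝒴 : M.SimpleColl 𝒴) (h𝒴𝒳 : 𝒴 ⊆ 𝒳) : 𝒴.card ≤ M.eps 𝒳 :=
  le_csSup (M.bddAbove_card_simpleColl 𝒳) ⟨𝒴, h𝒴𝒳, h𝒴, rfl⟩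

lemma exists_simpleColl_card_eq_eps (M : Matroid α) (𝒳 : Finset (Set α)) :
    ∃ 𝒴 ⊆ 𝒳, M.SimpleColl 𝒴 ∧ 𝒴.card = M.eps 𝒳 :=
  Nat.sSup_mem (s := {n | ∃ 𝒴 : Finset (Set α), 𝒴 ⊆ 𝒳 ∧ M.SimpleColl 𝒴 ∧ 𝒴.card = n})
    ⟨0, ∅, Finset.empty_subset _, by simp [SimpleColl], rfl⟩ (M.bddAbove_card_simpleColl 𝒳)

end Eps

end Matroid

namespace Matroid

theorem statement9_general {α : Type*} (a : ℕ)
    (M : Matroid α) (hM : M.Finite) (hr : 1 ≤ M.rank) (𝒳 : Finset (Set α))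
    (h𝒳 : ∀ X ∈ 𝒳, X ⊆ M.E ∧ M.rk X = a) :
    ∃ e ∈ M.E, M.rk {e} = 1 ∧
      ((M.rank : ℚ) - a) * M.eps 𝒳 ≤
        (M.rank : ℚ) * M.eps (𝒳.filter fun X =>
          X ⊆ (M.contractSet {e}).E ∧ (M.contractSet {e}).rk X = a) := by
  obtain ⟨B, hB⟩ := M.exists_isBase
  lift B to Finset α using hB.finite
  have hrB : M.rank = B.card := by
    rw [rank, hB.isBasis_ground.isBasis'.rk_eq_ncard, ncard_coe_finset]
  have hBne : B.Nonempty := Finset.card_pos.1 (hrB ▸ hr)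
  obtain ⟨𝒴, h𝒴𝒳, h𝒴, h𝒴card⟩ := M.exists_simpleColl_card_eq_eps 𝒳
  have hspan (X) (hX : X ∈ 𝒴) : (B.filter (· ∈ M.closure X)).card ≤ a := by
    rw [← (h𝒳 X (h𝒴𝒳 hX)).2, ← ncard_coe_finset, Finset.coe_filter]
    exact hB.indep.ncard_inter_closure_le_rk X
  obtain ⟨e, heB, he⟩ := hBne.exists_card_mul_card_filter_le 𝒴 (· ∈ M.closure ·) hspan
  have heE : e ∈ M.E := hB.subset_ground heB
  have hsurvive : 𝒴.filter (e ∉ M.closure ·) ⊆ 𝒳.filter fun X =>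
      X ⊆ (M.contractSet {e}).E ∧ (M.contractSet {e}).rk X = a := by
    intro X hX
    obtain ⟨hX𝒴, heX⟩ := Finset.mem_filter.1 hX
    obtain ⟨hXE, hXa⟩ := h𝒳 X (h𝒴𝒳 hX𝒴)
    refine Finset.mem_filter.2 ⟨h𝒴𝒳 hX𝒴, ?_, hXa ▸ rk_contractSet_singleton_eq heE heX⟩
    exact subset_sdiff_singleton hXE fun h ↦ heX (M.mem_closure_of_mem' h heE)
  refine ⟨e, heE, ?_, ?_⟩
  · rw [(hB.indep.subset (singleton_subset_iff.2 heB)).rk_eq_ncard, ncard_singleton]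
  have hle := (h𝒴.mono (Finset.filter_subset _ _)).card_le_eps hsurvive
  have hsplit := Finset.card_filter_add_card_filter_not (s := 𝒴) (e ∈ M.closure ·)
  rw [← hrB, h𝒴card] at he
  rw [h𝒴card] at hsplit
  rw [sub_mul, sub_le_iff_le_add]
  norm_cast
  nlinarith

/-- If `M` is a finite matroid of rank at least `1`, `a ≥ 1` and
`𝒳 ⊆ ℛ_a(M)`, then there is a nonloop `e ∈ E(M)` with
`ε_M(𝒳 ∩ ℛ_a(M/e)) ≥ (1 - a/r(M)) · ε_M(𝒳)`. -/
theorem statement9 {α : Type*} (a : ℕ) (ha : 1 ≤ a)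
    (M : Matroid α) (hM : M.Finite) (hr : 1 ≤ M.rank) (𝒳 : Finset (Set α))
    (h𝒳 : ∀ X ∈ 𝒳, X ⊆ M.E ∧ M.rk X = a) :
    ∃ e ∈ M.E, M.rk {e} = 1 ∧
      ((M.rank : ℚ) - a) * M.eps 𝒳 ≤
        (M.rank : ℚ) * M.eps (𝒳.filter fun X =>
          X ⊆ (M.contractSet {e}).E ∧ (M.contractSet {e}).rk X = a) :=
  statement9_general a M hM hr 𝒳 h𝒳

end Matroid
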